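/- Let p > q ≥ 1 be coprime integers and let u ∈ L_{p/q}. For every natural number l, the last letter β_{l+1} of wmax_{p/q}(u,l+1) is the unique integer β in {p−q,…,p−1} such that q divides p·val_{p/q}(u·wmax_{p/q}(u,l)) + β. -/

import Mathlib

/-- The valuation in base `p/q` of a digit word (most significant digit first):
`val_{p/q}(a_k ⋯ a_0) = (1/q) ∑ a_i (p/q)^i`, with `val(ε) = 0`. -/
def ratVal (p q : ℕ) (w : List ℕ) : ℚ :=
  w.foldl (fun x a => (p : ℚ) / q * x + (a : ℚ) / q) 0

/-- Membership in the language `L_{p/q}`: all letters lie in `{0,…,p-1}`, the valuation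
is a nonnegative integer, and the word is empty or has nonzero leading digit. -/
def InLang (p q : ℕ) (w : List ℕ) : Prop :=
  (∀ a ∈ w, a < p) ∧ (∃ n : ℕ, ratVal p q w = n) ∧ w.head? ≠ some 0

/-- `v` is the lexicographically least word of length `l` over `{0,…,p-1}`
such that `u ++ v ∈ L_{p/q}`. -/
def IsWmin (p q : ℕ) (u : List ℕ) (l : ℕ) (v : List ℕ) : Prop :=
  v.length = l ∧ InLang p q (u ++ v) ∧
    ∀ v' : List ℕ, v'.length = l → InLang p q (u ++ v') →
      ¬ List.Lex (· < · : ℕ → ℕ → Prop) v' v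

/-- `v` is the lexicographically greatest word of length `l` over `{0,…,p-1}`
such that `u ++ v ∈ L_{p/q}`. -/
def IsWmax (p q : ℕ) (u : List ℕ) (l : ℕ) (v : List ℕ) : Prop :=
  v.length = l ∧ InLang p q (u ++ v) ∧
    ∀ v' : List ℕ, v'.length = l → InLang p q (u ++ v') →
      ¬ List.Lex (· < · : ℕ → ℕ → Prop) v v'

/- ### Auxiliary lemmas -/

def rvf (p q : ℕ) : ℚ → ℚ → ℚ := fun x a => (p : ℚ) / q * x + a / q

lemma ratVal_eq (p q : ℕ) (w : List ℕ) :
    ratVal p q w = (w.map (fun (a : ℕ) => (a:ℚ))).foldl (rvf p q) 0 := by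
  unfold ratVal rvf
  rw [bind_pure_comp]
  rfl

lemma foldl_affine (p q : ℕ) (w : List ℚ) (x : ℚ) :
    w.foldl (rvf p q) x = ((p:ℚ)/q)^w.length * x + w.foldl (rvf p q) 0 := by
  induction w generalizing x with
  | nil => simp
  | cons a w ih =>
    rw [List.foldl_cons, List.foldl_cons, ih, ih (rvf p q 0 a), List.length_cons]
    unfold rvf
    ring

lemma ratVal_append (p q : ℕ) (x y : List ℕ) :
    ratVal p q (x ++ y) = ((p:ℚ)/q)^y.length * ratVal p q x + ratVal p q y := by
  rw [ratVal_eq, List.map_append, List.foldl_append, foldl_affine, ← ratVal_eq,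
    List.length_map, ← ratVal_eq]

lemma ratVal_concat (p q : ℕ) (x : List ℕ) (a : ℕ) :
    ratVal p q (x ++ [a]) = (p:ℚ)/q * ratVal p q x + (a:ℚ)/q := by
  rw [ratVal_append]
  have h : ratVal p q [a] = (a:ℚ)/q := by
    rw [ratVal_eq]
    unfold rvf
    simp
  rw [h, List.length_singleton]
  ring

lemma ratVal_nonneg (p q : ℕ) (w : List ℕ) : 0 ≤ ratVal p q w := by
  rw [ratVal_eq]
  have key : ∀ (W : List ℚ), (∀ a ∈ W, 0 ≤ a) → ∀ x : ℚ, 0 ≤ x → 0 ≤ W.foldl (rvf p q) x := by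
    intro W hW
    induction W with
    | nil => intro x hx; simpa using hx
    | cons a W ih =>
      intro x hx
      rw [List.foldl_cons]
      have ha : (0:ℚ) ≤ a := hW a (by simp)
      refine ih (fun b hb => hW b (by simp [hb])) _ ?_
      unfold rvf
      positivity
  refine key _ ?_ 0 le_rfl
  intro a ha
  simp only [List.mem_map] at ha
  obtain ⟨b, _, rfl⟩ := ha
  positivity

lemma ratVal_denom (p q : ℕ) (hq : 0 < q) (w : List ℕ) :
    ∃ z : ℤ, ratVal p q w * (q:ℚ)^w.length = z := by
  have hq0 : (q:ℚ) ≠ 0 := by positivity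
  induction w with
  | nil => exact ⟨0, by rw [ratVal_eq]; simp⟩
  | cons a w ih =>
    obtain ⟨z, hz⟩ := ih
    refine ⟨(p:ℤ)^w.length * a + q * z, ?_⟩
    have h1 : ratVal p q (a :: w) = ((p:ℚ)/q)^w.length * ((a:ℚ)/q) + ratVal p q w := by
      rw [ratVal_eq, List.map_cons, List.foldl_cons, foldl_affine, List.length_map,
        ← ratVal_eq]
      unfold rvf
      ring
    rw [h1, List.length_cons]
    push_cast
    rw [← hz]
    field_simp
    have hqn : (q:ℚ)^w.length * (q:ℚ)⁻¹^w.length = 1 := by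
      rw [← mul_pow, mul_inv_cancel₀ hq0, one_pow]
    linear_combination ((p:ℚ) ^ w.length * (q:ℚ) * (a:ℚ)) * hqn

lemma lex_append : ∀ {a b : List ℕ}, List.Lex (· < · : ℕ → ℕ → Prop) a b →
    a.length = b.length → ∀ (x y : List ℕ), List.Lex (· < · : ℕ → ℕ → Prop) (a++x) (b++y) := by
  intro a b hab
  induction hab with
  | nil => intro h; simp at h
  | cons h ih =>
    intro hlen x y
    exact List.Lex.cons (ih (by simpa using hlen) x y)
  | rel h =>
    intro _ x y
    exact List.Lex.rel h

lemma lex_concat_lt (v : List ℕ) {c d : ℕ} (h : c < d) :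
    List.Lex (· < · : ℕ → ℕ → Prop) (v++[c]) (v++[d]) := by
  induction v with
  | nil => exact List.Lex.rel h
  | cons a v ih => exact List.Lex.cons ih

lemma list_concat_cases (w : List ℕ) (h : w ≠ []) : ∃ W c, w = W ++ [c] := by
  induction w using List.reverseRecOn with
  | nil => exact absurd rfl h
  | append_singleton L b _ => exact ⟨L, b, rfl⟩

lemma rat_int_of (p q : ℕ) (k : ℕ) (hco : Nat.Coprime p q) (x : ℚ) (A B : ℤ)
    (hA : (p:ℚ) * x = A) (hB : x * (q:ℚ)^k = B) : ∃ z : ℤ, x = z := by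
  have hco2 : Nat.Coprime p (q^k) := hco.pow_right k
  have hg : Int.gcd (p:ℤ) ((q:ℤ)^k) = 1 := by
    have : ((q:ℤ)^k) = ((q^k : ℕ) : ℤ) := by push_cast; ring
    rw [this, Int.gcd_natCast_natCast]
    exact hco2
  have hbez : ∃ s t : ℤ, (1:ℤ) = p * s + (q:ℤ)^k * t := by
    have h2 := Int.gcd_eq_gcd_ab (p:ℤ) ((q:ℤ)^k)
    rw [hg] at h2
    exact ⟨_, _, by exact_mod_cast h2⟩
  obtain ⟨s, t, hbez⟩ := hbez
  refine ⟨s * A + t * B, ?_⟩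
  have hbezQ : (1:ℚ) = p * s + (q:ℚ)^k * t := by exact_mod_cast congrArg (Int.cast : ℤ → ℚ) hbez
  calc x = x * 1 := by ring
    _ = x * ((p:ℚ) * s + (q:ℚ)^k * t) := by rw [← hbezQ]
    _ = (s:ℚ) * ((p:ℚ)*x) + (t:ℚ) * (x * (q:ℚ)^k) := by ring
    _ = ((s * A + t * B : ℤ) : ℚ) := by rw [hA, hB]; push_cast; ring

set_option maxHeartbeats 1000000 in
/-- For coprime `p > q ≥ 1`, `u ∈ L_{p/q}`, and `l ∈ ℕ`: the last letter of
`wmax_{p/q}(u,l+1)` is the unique `β ∈ {p-q,…,p-1}` with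
`q ∣ p·val_{p/q}(u·wmax_{p/q}(u,l)) + β`. -/
theorem stmt5 (p q : ℕ) (hq : 1 ≤ q) (hpq : q < p) (hco : Nat.Coprime p q)
    (u : List ℕ) (hu : InLang p q u) (l : ℕ)
    (v w : List ℕ) (hv : IsWmax p q u l v) (hw : IsWmax p q u (l + 1) w)
    (m : ℤ) (hm : (m : ℚ) = (p : ℚ) * ratVal p q (u ++ v)) :
    ∀ β : ℕ, p - q ≤ β → β < p → ((q : ℤ) ∣ m + (β : ℤ) ↔ w.getLast? = some β) := by
  have hqZ : (0:ℤ) < q := by exact_mod_cast hq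
  have hqQ : (q:ℚ) ≠ 0 := Nat.cast_ne_zero.mpr (by omega)
  obtain ⟨hvlen, hvLang, hvmax⟩ := hv
  obtain ⟨hwlen, hwLang, hwmax⟩ := hw
  obtain ⟨hvdig, ⟨n, hn⟩, hvhead⟩ := hvLang
  have hmn : m = p * n := by
    have : (m:ℚ) = ((p * n : ℤ) : ℚ) := by rw [hm, hn]; push_cast; ring
    exact_mod_cast this
  have hm0 : 0 ≤ m := by rw [hmn]; positivity
  -- the candidate digit β₀
  set A : ℤ := m + (p - q : ℕ) with hA
  set r : ℤ := (-A) % q with hrdef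
  have hr0 : 0 ≤ r := Int.emod_nonneg _ (by omega)
  have hrq : r < q := Int.emod_lt_of_pos _ hqZ
  set β₀ : ℕ := (p - q) + r.toNat with hβ₀def
  have hβ₀cast : (β₀ : ℤ) = ((p - q : ℕ) : ℤ) + r := by
    rw [hβ₀def]
    push_cast [Int.toNat_of_nonneg hr0]
    ring
  have hβ₀div : (q:ℤ) ∣ m + β₀ := by
    refine ⟨-((-A) / q), ?_⟩
    have hmod := Int.emod_def (-A) (q:ℤ)
    rw [hβ₀cast]
    rw [hrdef, hmod, hA]
    ring
  have hβ₀lt : β₀ < p := by omega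
  have hβ₀ge : p - q ≤ β₀ := Nat.le_add_right _ _
  clear_value β₀ r A
  -- admissibility of extensions of v by a compatible digit
  have hval_ext : ∀ d : ℕ, (q:ℤ) ∣ m + d → ∃ N : ℕ, ratVal p q (u ++ (v ++ [d])) = N := by
    intro d hd
    obtain ⟨N, hN⟩ := hd
    have hN0 : 0 ≤ N := by nlinarith [hqZ, hm0]
    refine ⟨N.toNat, ?_⟩
    have hNQ : ((N.toNat : ℕ) : ℚ) = (N:ℚ) := by exact_mod_cast congrArg (Int.cast : ℤ → ℚ) (Int.toNat_of_nonneg hN0)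
    rw [← List.append_assoc, ratVal_concat, hn, hNQ]
    have hNcast : (m:ℚ) + d = q * N := by exact_mod_cast congrArg (Int.cast : ℤ → ℚ) hN
    rw [hm, hn] at hNcast
    field_simp
    linarith
  have hhead_ext : ∀ d : ℕ, d ≠ 0 → (u ++ (v ++ [d])).head? ≠ some 0 := by
    intro d hd
    rw [← List.append_assoc]
    cases h : u ++ v with
    | nil => simpa using hd
    | cons a t =>
      rw [h] at hvhead
      simpa using (by simpa using hvhead : a ≠ 0)
  have hdig_ext : ∀ d : ℕ, d < p → ∀ a ∈ u ++ (v ++ [d]), a < p := by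
    intro d hd a ha
    rw [← List.append_assoc, List.mem_append] at ha
    rcases ha with ha | ha
    · exact hvdig a ha
    · simp at ha; omega
  have hInβ₀ : InLang p q (u ++ (v ++ [β₀])) :=
    ⟨hdig_ext _ hβ₀lt, hval_ext _ hβ₀div, hhead_ext _ (by omega)⟩
  have hnotlex1 : ¬ List.Lex (· < · : ℕ → ℕ → Prop) w (v ++ [β₀]) :=
    hwmax _ (by simp [hvlen]) hInβ₀
  -- decompose w as w' ++ [c]
  have hwne : w ≠ [] := by intro h; rw [h] at hwlen; simp at hwlen
  obtain ⟨w', c, rfl⟩ := list_concat_cases w hwne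
  have hwlen' : w'.length = l := by
    rw [List.length_append, List.length_singleton] at hwlen
    omega
  obtain ⟨hwdig, ⟨N, hNval⟩, hwhead⟩ := hwLang
  have hassoc : u ++ (w' ++ [c]) = (u ++ w') ++ [c] := (List.append_assoc u w' [c]).symm
  -- the prefix u ++ w' is in the language
  have hNval' : ratVal p q ((u ++ w') ++ [c]) = (N:ℚ) := by rw [← hassoc]; exact hNval
  have hpx : (p:ℚ) * ratVal p q (u ++ w') = ((q * N - c : ℤ) : ℚ) := by
    rw [ratVal_concat] at hNval'
    push_cast
    field_simp at hNval'
    linarith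
  obtain ⟨B, hB⟩ := ratVal_denom p q (by omega) (u ++ w')
  obtain ⟨z, hz⟩ := rat_int_of p q (u ++ w').length hco _ _ _ hpx hB
  have hz0 : (0:ℤ) ≤ z := by
    have := ratVal_nonneg p q (u ++ w')
    rw [hz] at this
    exact_mod_cast this
  have hInw' : InLang p q (u ++ w') := by
    refine ⟨?_, ⟨z.toNat, ?_⟩, ?_⟩
    · intro a ha
      exact hwdig a (by rw [hassoc, List.mem_append]; left; exact ha)
    · rw [hz]
      exact_mod_cast congrArg (Int.cast : ℤ → ℚ) (Int.toNat_of_nonneg hz0).symm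
    · rw [hassoc] at hwhead
      cases h : u ++ w' with
      | nil => simp
      | cons a t =>
        rw [h] at hwhead
        simpa using (by simpa using hwhead : a ≠ 0)
  have hnotlex2 : ¬ List.Lex (· < · : ℕ → ℕ → Prop) v w' := hvmax w' hwlen' hInw'
  -- w' = v
  have hw'v : w' = v := by
    rcases trichotomous_of (List.Lex (· < · : ℕ → ℕ → Prop)) w' v with h | h | h
    · exact absurd (lex_append h (by rw [hwlen', hvlen]) [c] [β₀]) hnotlex1
    · exact h
    · exact absurd h hnotlex2
  subst hw'v
  -- divisibility for the last digit c
  have hqc : (q:ℤ) ∣ m + c := by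
    refine ⟨(N:ℤ), ?_⟩
    have h1 : (p:ℚ) * ratVal p q (u ++ w') = ((q * N - c : ℤ) : ℚ) := hpx
    rw [hz] at h1
    have h2 : (p:ℤ) * z = q * N - c := by exact_mod_cast h1
    have h3 : m = p * z := by
      have : (m:ℚ) = ((p * z : ℤ) : ℚ) := by rw [hm, hz]; push_cast; ring
      exact_mod_cast this
    rw [h3]
    linarith [h2]
  have hcp : c < p := hwdig c (by rw [List.mem_append]; right; simp)
  have hcβ : β₀ ≤ c := by
    by_contra hlt
    push_neg at hlt
    exact hnotlex1 (lex_concat_lt w' hlt)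
  -- conclusion
  intro β hβ1 hβ2
  constructor
  · intro hdivβ
    have h1 : (q:ℤ) ∣ ((c:ℤ) - β) := by
      obtain ⟨k1, hk1⟩ := hqc
      obtain ⟨k2, hk2⟩ := hdivβ
      exact ⟨k1 - k2, by linarith [hk1, hk2]⟩
    have hcb : c = β := by
      obtain ⟨k, hk⟩ := h1
      have hd1n : c < β + q := by omega
      have hd2n : β < c + q := by omega
      have e1 : (c:ℤ) < (β:ℤ) + q := by exact_mod_cast hd1n
      have e2 : (β:ℤ) < (c:ℤ) + q := by exact_mod_cast hd2n
      have hk0 : k = 0 := by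
        rcases lt_trichotomy k 0 with h | h | h
        · nlinarith
        · exact h
        · nlinarith
      rw [hk0, mul_zero] at hk
      have : (c:ℤ) = (β:ℤ) := by linarith
      exact_mod_cast this
    rw [List.getLast?_concat, hcb]
  · intro hlast
    rw [List.getLast?_concat] at hlast
    have : c = β := by injection hlast
    rw [← this]
    exact hqc
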